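/- Let P be a finite set, Q a finite set of quartets over P, let q = [p_i p_j | p_k p_l] ∈ Q, and let (A,B) be a cut of H(P,Q) with p_i, p_k ∈ A, p_j, p_l ∈ B, and γ_i^q, γ_j^q, γ_k^q, γ_l^q ∈ B. If at least one of u_i^q, u_j^q, u_k^q, u_l^q lies in A, then mim_{H(P,Q)}(A,B) ≥ 3. -/

import Mathlib

open SimpleGraph

/-- An induced matching of `G`: a set of edges of `G` that pairwise share no endpoint and
such that no edge of `G` joins an endpoint of one edge of the set to an endpoint of a
different edge of the set. -/
def IsInducedMatching {V : Type} (G : SimpleGraph V) (M : Set (Sym2 V)) : Prop :=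
  M ⊆ G.edgeSet ∧
    ∀ e ∈ M, ∀ f ∈ M, e ≠ f → ∀ x ∈ e, ∀ y ∈ f, x ≠ y ∧ ¬ G.Adj x y

/-- The bipartite graph `G[A, Aᶜ]` consisting of the edges of `G` crossing the cut `(A, Aᶜ)`. -/
def cutGraph {V : Type} (G : SimpleGraph V) (A : Set V) : SimpleGraph V where
  Adj x y := G.Adj x y ∧ ((x ∈ A ∧ y ∉ A) ∨ (x ∉ A ∧ y ∈ A))
  symm := by
    constructor
    rintro x y ⟨h, h'⟩
    exact ⟨h.symm, by tauto⟩
  loopless := by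
    constructor
    rintro x ⟨h, -⟩
    exact G.loopless.irrefl x h

/-- The graph `G − E[Xᶜ]`, obtained from `G` by deleting all edges with both endpoints
outside of `X`. -/
def delOutside {V : Type} (G : SimpleGraph V) (X : Set V) : SimpleGraph V where
  Adj x y := G.Adj x y ∧ (x ∈ X ∨ y ∈ X)
  symm := by
    constructor
    rintro x y ⟨h, h'⟩
    exact ⟨h.symm, h'.symm⟩
  loopless := by
    constructor
    rintro x ⟨h, -⟩
    exact G.loopless.irrefl x h

/-- The mim-value of the cut `(A, Aᶜ)`: the maximum size of an induced matching of `G[A, Aᶜ]`. -/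
noncomputable def mimValue {V : Type} (G : SimpleGraph V) (A : Set V) : ℕ :=
  sSup {n | ∃ M : Set (Sym2 V), IsInducedMatching (cutGraph G A) M ∧ M.ncard = n}

/-- The sim-value of the cut `(A, Aᶜ)`: the maximum size of a set of crossing edges of `G`
that is an induced matching of `G`. -/
noncomputable def simValue {V : Type} (G : SimpleGraph V) (A : Set V) : ℕ :=
  sSup {n | ∃ M : Set (Sym2 V), M ⊆ (cutGraph G A).edgeSet ∧
    IsInducedMatching G M ∧ M.ncard = n}

/-- The upper-induced matching number of `X`: the maximum size of a set of crossing edges of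
`G` that is an induced matching of `G − E[Xᶜ]`. -/
noncomputable def upperIMN {V : Type} (G : SimpleGraph V) (X : Set V) : ℕ :=
  sSup {n | ∃ M : Set (Sym2 V), M ⊆ (cutGraph G X).edgeSet ∧
    IsInducedMatching (delOutside G X) M ∧ M.ncard = n}

/-- The omim-value of the cut `(A, Aᶜ)`. -/
noncomputable def omimValue {V : Type} (G : SimpleGraph V) (A : Set V) : ℕ :=
  min (upperIMN G A) (upperIMN G Aᶜ)

/-- The Omim-value of the cut `(A, Aᶜ)`. -/
noncomputable def bigOmimValue {V : Type} (G : SimpleGraph V) (A : Set V) : ℕ :=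
  max (upperIMN G A) (upperIMN G Aᶜ)

/-- A branch decomposition over a vertex set `V`: a finite ternary tree (every vertex has
degree 1 or 3) together with a bijection from `V` to its set of leaves. -/
structure BranchDecomp (V : Type) : Type 1 where
  τ : Type
  tree : SimpleGraph τ
  finite : Finite τ
  isTree : tree.IsTree
  ternary : ∀ t : τ, (tree.neighborSet t).ncard = 1 ∨ (tree.neighborSet t).ncard = 3
  toLeaf : V → τ
  leafBij : Set.BijOn toLeaf Set.univ {t | (tree.neighborSet t).ncard = 1}

/-- The side of the cut induced by the tree edge `xy` that contains the endpoint `x`: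
the set of vertices of `V` whose leaf lies in the component of `T − xy` containing `x`. -/
def BranchDecomp.side {V : Type} (D : BranchDecomp V) (x y : D.τ) : Set V :=
  {v | (D.tree.deleteEdges {s(x, y)}).Reachable (D.toLeaf v) x}

/-- The width of a branch decomposition with respect to a cut-value function `val`:
the maximum of `val` over all cuts induced by edges of the tree. -/
noncomputable def BranchDecomp.width {V : Type} (D : BranchDecomp V) (val : Set V → ℕ) : ℕ :=
  sSup {n | ∃ x y : D.τ, D.tree.Adj x y ∧ n = val (D.side x y)}

/-- A branch decomposition is a caterpillar if its internal (degree-3) vertices induce a path. -/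
def BranchDecomp.IsCaterpillar {V : Type} (D : BranchDecomp V) : Prop :=
  ∃ n : ℕ, Nonempty
    ((D.tree.induce {t | (D.tree.neighborSet t).ncard = 3}) ≃g SimpleGraph.pathGraph n)

noncomputable def mimWidth {V : Type} (G : SimpleGraph V) : ℕ :=
  sInf {n | ∃ D : BranchDecomp V, D.width (mimValue G) = n}

noncomputable def simWidth {V : Type} (G : SimpleGraph V) : ℕ :=
  sInf {n | ∃ D : BranchDecomp V, D.width (simValue G) = n}

noncomputable def omimWidth {V : Type} (G : SimpleGraph V) : ℕ :=
  sInf {n | ∃ D : BranchDecomp V, D.width (omimValue G) = n}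

noncomputable def bigOmimWidth {V : Type} (G : SimpleGraph V) : ℕ :=
  sInf {n | ∃ D : BranchDecomp V, D.width (bigOmimValue G) = n}

noncomputable def linMimWidth {V : Type} (G : SimpleGraph V) : ℕ :=
  sInf {n | ∃ D : BranchDecomp V, D.IsCaterpillar ∧ D.width (mimValue G) = n}

noncomputable def linSimWidth {V : Type} (G : SimpleGraph V) : ℕ :=
  sInf {n | ∃ D : BranchDecomp V, D.IsCaterpillar ∧ D.width (simValue G) = n}

noncomputable def linOmimWidth {V : Type} (G : SimpleGraph V) : ℕ :=
  sInf {n | ∃ D : BranchDecomp V, D.IsCaterpillar ∧ D.width (omimValue G) = n}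

noncomputable def linBigOmimWidth {V : Type} (G : SimpleGraph V) : ℕ :=
  sInf {n | ∃ D : BranchDecomp V, D.IsCaterpillar ∧ D.width (bigOmimValue G) = n}

/-- A quartet `[ab|cd]` over `P`: four pairwise distinct elements of `P`, partitioned into
the two unordered pairs `{a, b}` and `{c, d}`. -/
structure Quartet (P : Type) where
  a : P
  b : P
  c : P
  d : P
  hab : a ≠ b
  hac : a ≠ c
  had : a ≠ d
  hbc : b ≠ c
  hbd : b ≠ d
  hcd : c ≠ d

/-- The four elements of a quartet, indexed by `Fin 4`. -/
def Quartet.elem {P : Type} (q : Quartet P) : Fin 4 → P := ![q.a, q.b, q.c, q.d]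

/-- Whether two indices in `Fin 4` correspond to the same side (pair) of a quartet. -/
def sameSide (i j : Fin 4) : Prop := (i.val < 2 ∧ j.val < 2) ∨ (2 ≤ i.val ∧ 2 ≤ j.val)

/-- A ternary tree with leaves labeled by `P` satisfies the quartet `[ab|cd]` if some edge of
the tree separates the leaves labeled `a, b` from the leaves labeled `c, d`. -/
def BranchDecomp.Satisfies {P : Type} (D : BranchDecomp P) (q : Quartet P) : Prop :=
  ∃ x y : D.τ, D.tree.Adj x y ∧
    q.a ∈ D.side x y ∧ q.b ∈ D.side x y ∧ q.c ∉ D.side x y ∧ q.d ∉ D.side x y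

/-- A linear order `le` on `P` satisfies the quartet `[ab|cd]` if both `a` and `b` are
smaller than both `c` and `d`, or both `c` and `d` are smaller than both `a` and `b`. -/
def OrdSatisfies {P : Type} (le : P → P → Prop) (q : Quartet P) : Prop :=
  (le q.a q.c ∧ le q.a q.d ∧ le q.b q.c ∧ le q.b q.d) ∨
  (le q.c q.a ∧ le q.d q.a ∧ le q.c q.b ∧ le q.d q.b)

/-- The vertices of the graph `G(P, Q)`: the points of `P` together with the vertices
`u_x^q` for `q ∈ Q` and `x` one of the four elements of `q` (indexed by `Fin 4`). -/
inductive QVert (P : Type) (Q : Finset (Quartet P)) : Type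
  | pt (p : P)
  | u (q : {q : Quartet P // q ∈ Q}) (i : Fin 4)

/-- Base relation generating the edges of `G(P, Q)`. -/
def qRel {P : Type} {Q : Finset (Quartet P)} : QVert P Q → QVert P Q → Prop
  | QVert.pt p, QVert.u q i => p = q.1.elem i
  | QVert.u q i, QVert.u q' j => q = q' → sameSide i j
  | _, _ => False

/-- The graph `G(P, Q)` of the sim-width/omim-width/Omim-width reduction. -/
def quartetGraph (P : Type) (Q : Finset (Quartet P)) : SimpleGraph (QVert P Q) :=
  SimpleGraph.fromRel qRel

/-- The vertices of the graph `G'(P, Q)`: the points of `P`, the vertices `u_x^q`, and the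
vertices `γ_x^q`. -/
inductive GpVert (P : Type) (Q : Finset (Quartet P)) : Type
  | pt (p : P)
  | u (q : {q : Quartet P // q ∈ Q}) (i : Fin 4)
  | g (q : {q : Quartet P // q ∈ Q}) (i : Fin 4)

/-- Base relation generating the edges of `G'(P, Q)`. -/
def gpRel {P : Type} {Q : Finset (Quartet P)} : GpVert P Q → GpVert P Q → Prop
  | GpVert.pt p, GpVert.u q i => p = q.1.elem i
  | GpVert.pt p, GpVert.g q i => p = q.1.elem i
  | GpVert.u q i, GpVert.u q' j => q = q' → sameSide i j
  | GpVert.u q _, GpVert.g q' _ => q ≠ q'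
  | GpVert.g q _, GpVert.u q' _ => q ≠ q'
  | GpVert.g _ _, GpVert.g _ _ => True
  | _, _ => False

/-- The graph `G'(P, Q)` of the mim-width reduction. -/
def gpGraph (P : Type) (Q : Finset (Quartet P)) : SimpleGraph (GpVert P Q) :=
  SimpleGraph.fromRel gpRel

/-- Base relation generating the edges of `H(P, Q)`; the extra vertex `ω` is `none`,
adjacent exactly to the vertices of `U`. -/
def hRel {P : Type} {Q : Finset (Quartet P)} :
    Option (GpVert P Q) → Option (GpVert P Q) → Prop
  | some x, some y => gpRel x y
  | none, some (GpVert.u _ _) => True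
  | _, _ => False

/-- The graph `H(P, Q)`, obtained from `G'(P, Q)` by adding a vertex `ω` adjacent to all of `U`. -/
def hGraph (P : Type) (Q : Finset (Quartet P)) : SimpleGraph (Option (GpVert P Q)) :=
  SimpleGraph.fromRel hRel


lemma cutGraph_adj {V : Type} (G : SimpleGraph V) (A : Set V) (x y : V) :
    (cutGraph G A).Adj x y ↔ G.Adj x y ∧ ((x ∈ A ∧ y ∉ A) ∨ (x ∉ A ∧ y ∈ A)) := Iff.rfl

instance gpVertFinite {P : Type} [Fintype P] {Q : Finset (Quartet P)} :
    Finite (GpVert P Q) := by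
  classical
  let f : GpVert P Q → P ⊕ ({q : Quartet P // q ∈ Q} × Fin 4) ⊕ ({q : Quartet P // q ∈ Q} × Fin 4) :=
    fun v => match v with
    | .pt p => .inl p
    | .u q i => .inr (.inl (q, i))
    | .g q i => .inr (.inr (q, i))
  have hf : Function.Injective f := by
    intro x y h
    cases x <;> cases y <;> simp_all [f]
  exact Finite.of_injective f hf

instance optionFinite {α : Type} [Finite α] : Finite (Option α) := by
  have := Fintype.ofFinite α
  infer_instance

lemma mim_ge_three {V : Type} [Finite V] (G : SimpleGraph V) (A : Set V)
    (x1 y1 x2 y2 x3 y3 : V)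
    (h1 : (cutGraph G A).Adj x1 y1) (h2 : (cutGraph G A).Adj x2 y2)
    (h3 : (cutGraph G A).Adj x3 y3)
    (h12 : ∀ u, (u = x1 ∨ u = y1) → ∀ v, (v = x2 ∨ v = y2) → u ≠ v ∧ ¬(cutGraph G A).Adj u v)
    (h13 : ∀ u, (u = x1 ∨ u = y1) → ∀ v, (v = x3 ∨ v = y3) → u ≠ v ∧ ¬(cutGraph G A).Adj u v)
    (h23 : ∀ u, (u = x2 ∨ u = y2) → ∀ v, (v = x3 ∨ v = y3) → u ≠ v ∧ ¬(cutGraph G A).Adj u v) :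
    3 ≤ mimValue G A := by
  classical
  have h21 : ∀ u, (u = x2 ∨ u = y2) → ∀ v, (v = x1 ∨ v = y1) → u ≠ v ∧ ¬(cutGraph G A).Adj u v :=
    fun u hu v hv => ⟨(h12 v hv u hu).1.symm, fun h => (h12 v hv u hu).2 h.symm⟩
  have h31 : ∀ u, (u = x3 ∨ u = y3) → ∀ v, (v = x1 ∨ v = y1) → u ≠ v ∧ ¬(cutGraph G A).Adj u v :=
    fun u hu v hv => ⟨(h13 v hv u hu).1.symm, fun h => (h13 v hv u hu).2 h.symm⟩
  have h32 : ∀ u, (u = x3 ∨ u = y3) → ∀ v, (v = x2 ∨ v = y2) → u ≠ v ∧ ¬(cutGraph G A).Adj u v :=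
    fun u hu v hv => ⟨(h23 v hv u hu).1.symm, fun h => (h23 v hv u hu).2 h.symm⟩
  have hne12 : s(x1, y1) ≠ s(x2, y2) := by
    intro h
    have hx : x1 ∈ s(x2, y2) := h ▸ Sym2.mem_mk_left x1 y1
    rw [Sym2.mem_iff] at hx
    rcases hx with h' | h'
    · exact (h12 x1 (Or.inl rfl) x2 (Or.inl rfl)).1 h'
    · exact (h12 x1 (Or.inl rfl) y2 (Or.inr rfl)).1 h'
  have hne13 : s(x1, y1) ≠ s(x3, y3) := by
    intro h
    have hx : x1 ∈ s(x3, y3) := h ▸ Sym2.mem_mk_left x1 y1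
    rw [Sym2.mem_iff] at hx
    rcases hx with h' | h'
    · exact (h13 x1 (Or.inl rfl) x3 (Or.inl rfl)).1 h'
    · exact (h13 x1 (Or.inl rfl) y3 (Or.inr rfl)).1 h'
  have hne23 : s(x2, y2) ≠ s(x3, y3) := by
    intro h
    have hx : x2 ∈ s(x3, y3) := h ▸ Sym2.mem_mk_left x2 y2
    rw [Sym2.mem_iff] at hx
    rcases hx with h' | h'
    · exact (h23 x2 (Or.inl rfl) x3 (Or.inl rfl)).1 h'
    · exact (h23 x2 (Or.inl rfl) y3 (Or.inr rfl)).1 h'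
  have hM : IsInducedMatching (cutGraph G A) {s(x1, y1), s(x2, y2), s(x3, y3)} := by
    constructor
    · intro e he
      simp only [Set.mem_insert_iff, Set.mem_singleton_iff] at he
      rcases he with rfl | rfl | rfl
      · exact h1
      · exact h2
      · exact h3
    · intro e he f hf hef x hx y hy
      simp only [Set.mem_insert_iff, Set.mem_singleton_iff] at he hf
      rcases he with rfl | rfl | rfl <;> rcases hf with rfl | rfl | rfl <;>
        rw [Sym2.mem_iff] at hx hy
      · exact absurd rfl hef
      · exact h12 x hx y hy
      · exact h13 x hx y hy
      · exact h21 x hx y hy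
      · exact absurd rfl hef
      · exact h23 x hx y hy
      · exact h31 x hx y hy
      · exact h32 x hx y hy
      · exact absurd rfl hef
  have hcard : ({s(x1, y1), s(x2, y2), s(x3, y3)} : Set (Sym2 V)).ncard = 3 := by
    rw [Set.ncard_insert_of_notMem (by simp [hne12, hne13]) (Set.toFinite _),
      Set.ncard_pair hne23]
  have hmem : (3 : ℕ) ∈ {n | ∃ M : Set (Sym2 V),
      IsInducedMatching (cutGraph G A) M ∧ M.ncard = n} := ⟨_, hM, hcard⟩
  have hbdd : BddAbove {n | ∃ M : Set (Sym2 V),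
      IsInducedMatching (cutGraph G A) M ∧ M.ncard = n} := by
    refine ⟨Nat.card (Sym2 V), ?_⟩
    rintro n ⟨M, -, rfl⟩
    calc M.ncard ≤ (Set.univ : Set (Sym2 V)).ncard :=
          Set.ncard_le_ncard (Set.subset_univ M) Set.finite_univ
      _ = Nat.card (Sym2 V) := Set.ncard_univ _
  exact le_csSup hbdd hmem

/-- If `q = [p_i p_j | p_k p_l] ∈ Q` and `(A, B)` is a cut of `H(P,Q)` with
`p_i, p_k ∈ A`, `p_j, p_l ∈ B`, all four `γ`-vertices of `q` in `B`, and at least one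
`u`-vertex of `q` in `A`, then `mim(A,B) ≥ 3`. -/
theorem stmt12 {P : Type} [Fintype P] (Q : Finset (Quartet P)) (q : Quartet P) (hq : q ∈ Q)
    (A : Set (Option (GpVert P Q)))
    (hi : some (GpVert.pt q.a) ∈ A) (hk : some (GpVert.pt q.c) ∈ A)
    (hj : some (GpVert.pt q.b) ∉ A) (hl : some (GpVert.pt q.d) ∉ A)
    (hg : ∀ i : Fin 4, some (GpVert.g ⟨q, hq⟩ i) ∉ A)
    (hu : ∃ i : Fin 4, some (GpVert.u ⟨q, hq⟩ i) ∈ A) :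
    3 ≤ mimValue (hGraph P Q) A := by
  classical
  by_cases hA1 : some (GpVert.u ⟨q, hq⟩ 1) ∈ A
  · refine mim_ge_three (hGraph P Q) A
      (some (GpVert.pt q.a)) (some (GpVert.g ⟨q, hq⟩ 0))
      (some (GpVert.pt q.c)) (some (GpVert.g ⟨q, hq⟩ 2))
      (some (GpVert.u ⟨q, hq⟩ 1)) (some (GpVert.pt q.b)) ?_ ?_ ?_ ?_ ?_ ?_
    · exact ⟨⟨by simp, Or.inl (by simp [hRel, gpRel, Quartet.elem])⟩, Or.inl ⟨hi, hg 0⟩⟩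
    · exact ⟨⟨by simp, Or.inl (by simp [hRel, gpRel, Quartet.elem])⟩, Or.inl ⟨hk, hg 2⟩⟩
    · exact ⟨⟨by simp, Or.inr (by simp [hRel, gpRel, Quartet.elem])⟩, Or.inl ⟨hA1, hj⟩⟩
    all_goals
      rintro u (rfl | rfl) v (rfl | rfl) <;> constructor <;>
        simp [cutGraph_adj, hGraph, SimpleGraph.fromRel_adj, hRel, gpRel, Quartet.elem, sameSide,
          q.hab, q.hac, q.had, q.hbc, q.hbd, q.hcd,
          q.hab.symm, q.hac.symm, q.had.symm, q.hbc.symm, q.hbd.symm, q.hcd.symm,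
          hi, hk, hj, hl, hg, hA1]
  by_cases hA3 : some (GpVert.u ⟨q, hq⟩ 3) ∈ A
  · refine mim_ge_three (hGraph P Q) A
      (some (GpVert.pt q.a)) (some (GpVert.g ⟨q, hq⟩ 0))
      (some (GpVert.pt q.c)) (some (GpVert.g ⟨q, hq⟩ 2))
      (some (GpVert.u ⟨q, hq⟩ 3)) (some (GpVert.pt q.d)) ?_ ?_ ?_ ?_ ?_ ?_
    · exact ⟨⟨by simp, Or.inl (by simp [hRel, gpRel, Quartet.elem])⟩, Or.inl ⟨hi, hg 0⟩⟩
    · exact ⟨⟨by simp, Or.inl (by simp [hRel, gpRel, Quartet.elem])⟩, Or.inl ⟨hk, hg 2⟩⟩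
    · exact ⟨⟨by simp, Or.inr (by simp [hRel, gpRel, Quartet.elem])⟩, Or.inl ⟨hA3, hl⟩⟩
    all_goals
      rintro u (rfl | rfl) v (rfl | rfl) <;> constructor <;>
        simp [cutGraph_adj, hGraph, SimpleGraph.fromRel_adj, hRel, gpRel, Quartet.elem, sameSide,
          q.hab, q.hac, q.had, q.hbc, q.hbd, q.hcd,
          q.hab.symm, q.hac.symm, q.had.symm, q.hbc.symm, q.hbd.symm, q.hcd.symm,
          hi, hk, hj, hl, hg, hA3]
  by_cases hA0 : some (GpVert.u ⟨q, hq⟩ 0) ∈ A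
  · refine mim_ge_three (hGraph P Q) A
      (some (GpVert.pt q.a)) (some (GpVert.g ⟨q, hq⟩ 0))
      (some (GpVert.pt q.c)) (some (GpVert.g ⟨q, hq⟩ 2))
      (some (GpVert.u ⟨q, hq⟩ 0)) (some (GpVert.u ⟨q, hq⟩ 1)) ?_ ?_ ?_ ?_ ?_ ?_
    · exact ⟨⟨by simp, Or.inl (by simp [hRel, gpRel, Quartet.elem])⟩, Or.inl ⟨hi, hg 0⟩⟩
    · exact ⟨⟨by simp, Or.inl (by simp [hRel, gpRel, Quartet.elem])⟩, Or.inl ⟨hk, hg 2⟩⟩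
    · exact ⟨⟨by simp, Or.inl (fun _ => Or.inl ⟨Nat.lt_succ_self 0 |>.trans (Nat.lt_succ_self 1), Nat.lt_succ_self 1⟩)⟩, Or.inl ⟨hA0, hA1⟩⟩
    all_goals
      rintro u (rfl | rfl) v (rfl | rfl) <;> constructor <;>
        simp [cutGraph_adj, hGraph, SimpleGraph.fromRel_adj, hRel, gpRel, Quartet.elem, sameSide,
          q.hab, q.hac, q.had, q.hbc, q.hbd, q.hcd,
          q.hab.symm, q.hac.symm, q.had.symm, q.hbc.symm, q.hbd.symm, q.hcd.symm,
          hi, hk, hj, hl, hg, hA0, hA1]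
  · have hA2 : some (GpVert.u ⟨q, hq⟩ 2) ∈ A := by
      obtain ⟨i, hui⟩ := hu
      fin_cases i
      · exact absurd hui hA0
      · exact absurd hui hA1
      · exact hui
      · exact absurd hui hA3
    refine mim_ge_three (hGraph P Q) A
      (some (GpVert.pt q.a)) (some (GpVert.g ⟨q, hq⟩ 0))
      (some (GpVert.pt q.c)) (some (GpVert.g ⟨q, hq⟩ 2))
      (some (GpVert.u ⟨q, hq⟩ 2)) (some (GpVert.u ⟨q, hq⟩ 3)) ?_ ?_ ?_ ?_ ?_ ?_
    · exact ⟨⟨by simp, Or.inl (by simp [hRel, gpRel, Quartet.elem])⟩, Or.inl ⟨hi, hg 0⟩⟩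
    · exact ⟨⟨by simp, Or.inl (by simp [hRel, gpRel, Quartet.elem])⟩, Or.inl ⟨hk, hg 2⟩⟩
    · exact ⟨⟨by simp, Or.inl (fun _ => Or.inr ⟨Nat.le_refl 2, Nat.le_succ 2⟩)⟩, Or.inl ⟨hA2, hA3⟩⟩
    all_goals
      rintro u (rfl | rfl) v (rfl | rfl) <;> constructor <;>
        simp [cutGraph_adj, hGraph, SimpleGraph.fromRel_adj, hRel, gpRel, Quartet.elem, sameSide,
          q.hab, q.hac, q.had, q.hbc, q.hbd, q.hcd,
          q.hab.symm, q.hac.symm, q.had.symm, q.hbc.symm, q.hbd.symm, q.hcd.symm,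
          hi, hk, hj, hl, hg, hA2, hA3]
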